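/- arXiv:2503.21478 — 3 statements merged into one kernel-verified Lean document; each statement's English description precedes it below -/
import Mathlib

section
/- Let A ≥ 1 and let P : ℝ² → ℝ² be the linear map with P(u) = A·u and P(v) = v for an orthonormal basis (u,v) of ℝ². Then for every nonzero x ∈ ℝ², the inner product ⟨x, P(x)⟩ is positive and ⟨x, P(x)⟩/(‖x‖·‖P(x)‖) ≥ 2√A/(A+1). -/
/-!
In coordinates `x = a • u + b • v` one has `⟪x, P x⟫ = A a² + b²`, `‖x‖² = a² + b²` and
`‖P x‖² = A² a² + b²`, so the claim is the two-point Kantorovich inequality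
`4A (a² + b²)(A² a² + b²) ≤ (A + 1)² (A a² + b²)²`, whose defect is the square
`((A - 1)(A a² - b²))²`.
-/

open Module RealInnerProductSpace

theorem two_sqrt_div_add_one_le_div {A a b : ℝ} (hA : 0 < A) (hp : 0 < a ^ 2 + b ^ 2) :
    2 * √A / (A + 1) ≤ (A * a ^ 2 + b ^ 2) / (√(a ^ 2 + b ^ 2) * √(A ^ 2 * a ^ 2 + b ^ 2)) := by
  have hq : 0 < A ^ 2 * a ^ 2 + b ^ 2 := by
    rcases eq_or_ne a 0 with rfl | ha
    · simpa using hp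
    · positivity
  have hN : 0 < A * a ^ 2 + b ^ 2 := by nlinarith [sq_nonneg a, sq_nonneg b]
  have defect : ((A * a ^ 2 + b ^ 2) * (A + 1)) ^ 2
      - 4 * A * ((a ^ 2 + b ^ 2) * (A ^ 2 * a ^ 2 + b ^ 2))
      = ((A - 1) * (A * a ^ 2 - b ^ 2)) ^ 2 := by ring
  rw [div_le_div_iff₀ (by linarith) (by positivity)]
  calc 2 * √A * (√(a ^ 2 + b ^ 2) * √(A ^ 2 * a ^ 2 + b ^ 2))
      = √(4 * A * ((a ^ 2 + b ^ 2) * (A ^ 2 * a ^ 2 + b ^ 2))) := by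
        rw [Real.sqrt_mul (by positivity), Real.sqrt_mul hp.le, Real.sqrt_mul zero_le_four,
          show (4 : ℝ) = 2 ^ 2 by norm_num, Real.sqrt_sq zero_le_two]
    _ ≤ (A * a ^ 2 + b ^ 2) * (A + 1) :=
        (Real.sqrt_le_left (by positivity)).mpr
          (by linarith [sq_nonneg ((A - 1) * (A * a ^ 2 - b ^ 2))])

section Orthonormal

variable {E : Type*} [NormedAddCommGroup E] [InnerProductSpace ℝ E] {u v : E}

theorem inner_smul_add_smul_of_orthonormal (hu : ‖u‖ = 1) (hv : ‖v‖ = 1) (huv : ⟪u, v⟫ = 0)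
    (a b c d : ℝ) : ⟪a • u + b • v, c • u + d • v⟫ = a * c + b * d := by
  simp only [inner_add_left, inner_add_right, real_inner_smul_left, real_inner_smul_right,
    real_inner_self_eq_norm_sq, hu, hv, huv, real_inner_comm u v]
  ring

theorem norm_smul_add_smul_of_orthonormal (hu : ‖u‖ = 1) (hv : ‖v‖ = 1) (huv : ⟪u, v⟫ = 0)
    (a b : ℝ) : ‖a • u + b • v‖ = √(a ^ 2 + b ^ 2) := by
  rw [norm_eq_sqrt_real_inner, inner_smul_add_smul_of_orthonormal hu hv huv]
  ring_nf

theorem eq_inner_smul_add_inner_smul_of_finrank_eq_two (h2 : finrank ℝ E = 2)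
    (hu : ‖u‖ = 1) (hv : ‖v‖ = 1) (huv : ⟪u, v⟫ = 0) (x : E) :
    x = ⟪u, x⟫ • u + ⟪v, x⟫ • v := by
  have : FiniteDimensional ℝ E := .of_finrank_eq_succ h2
  have hon : Orthonormal ℝ ![u, v] := by
    rw [orthonormal_iff_ite]
    intro i j
    fin_cases i <;> fin_cases j <;> simp [hu, hv, huv, real_inner_comm u v]
  have hspan := hon.linearIndependent.span_eq_top_of_card_eq_finrank (by simp [h2])
  simpa [Fin.sum_univ_two] using ((OrthonormalBasis.mk hon hspan.ge).sum_repr' x).symm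

end Orthonormal

/-- If `P` has eigenvalues `A ≥ 1` and `1` w.r.t. an orthonormal basis of `ℝ²`, then
for every nonzero `x`, `⟨x, P x⟩ > 0` and `⟨x, P x⟩/(‖x‖·‖P x‖) ≥ 2√A/(A+1)`. -/
theorem stmt6 (A : ℝ) (hA : 1 ≤ A)
    (u v : EuclideanSpace ℝ (Fin 2)) (hu : ‖u‖ = 1) (hv : ‖v‖ = 1)
    (huv : inner ℝ u v = (0 : ℝ))
    (P : EuclideanSpace ℝ (Fin 2) →ₗ[ℝ] EuclideanSpace ℝ (Fin 2))
    (hPu : P u = A • u) (hPv : P v = v)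
    (x : EuclideanSpace ℝ (Fin 2)) (hx : x ≠ 0) :
    0 < (inner ℝ x (P x) : ℝ) ∧
      2 * Real.sqrt A / (A + 1) ≤ (inner ℝ x (P x) : ℝ) / (‖x‖ * ‖P x‖) := by
  have hx_eq := eq_inner_smul_add_inner_smul_of_finrank_eq_two (by simp) hu hv huv x
  set a := ⟪u, x⟫
  set b := ⟪v, x⟫
  have hPx : P x = (A * a) • u + b • v := by
    rw [hx_eq, map_add, map_smul, map_smul, hPu, hPv, smul_smul, mul_comm a A]
  have hab : 0 < a ^ 2 + b ^ 2 := by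
    rw [← Real.sqrt_pos, ← norm_smul_add_smul_of_orthonormal hu hv huv, ← hx_eq]
    exact norm_pos_iff.mpr hx
  have hinner : ⟪x, P x⟫ = A * a ^ 2 + b ^ 2 := by
    rw [hPx, hx_eq, inner_smul_add_smul_of_orthonormal hu hv huv]; ring
  rw [hinner, hPx, hx_eq, norm_smul_add_smul_of_orthonormal hu hv huv,
    norm_smul_add_smul_of_orthonormal hu hv huv, mul_pow]
  have hA0 : 0 < A := by linarith
  exact ⟨by nlinarith [sq_nonneg a, sq_nonneg b], two_sqrt_div_add_one_le_div hA0 hab⟩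
end

section
/- Let A be a real number with 1 ≤ A < d⁴ where d = 1/cos(π/(4N)) for a positive integer N, and let P : ℝ² → ℝ² be the positive definite linear map with eigenvalues A and 1 with respect to an orthonormal eigenbasis. Then for every nonzero x ∈ ℝ², the angle between x and P(x) is at most π/(2N). -/
/-!
In an orthonormal eigenbasis write `x = a u + b v`, so that `⟪x, P x⟫ = A a² + b²`,
`‖x‖² = a² + b²` and `‖P x‖² = A² a² + b²`. Minimising the cosine of the angle over `(a, b)`
gives `2√A / (A + 1)` (the first antieigenvalue of `P`), so it suffices that
`cos² θ (A + 1)² ≤ 4A` for `θ = π/(2N)`. With `k = cos² (π/(4N))` we have `cos θ = 2k - 1`, and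
the hypothesis `A < d⁴` says `A k² < 1`; the inequality `(2k - 1)² (A + 1)² ≤ 4A` holds at both
ends `A = 1` and `A = k⁻²` of that range and its left side minus its right side is convex in `A`.
-/

open Real InnerProductGeometry Module
open scoped InnerProductSpace

lemma sq_mul_mul_le_sq_of_sq_mul_add_one_sq_le {A C t s : ℝ} (hA : 0 ≤ A)
    (hC : C ^ 2 * (A + 1) ^ 2 ≤ 4 * A) (ht : 0 ≤ t) (hs : 0 ≤ s) :
    C ^ 2 * ((t + s) * (A ^ 2 * t + s)) ≤ (A * t + s) ^ 2 := by
  have hC1 : C ^ 2 ≤ 1 := by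
    by_contra! h
    nlinarith [sq_nonneg (A - 1), mul_lt_mul_of_pos_right h (by positivity : (0 : ℝ) < (A + 1) ^ 2)]
  have hdiff : (A * t + s) ^ 2 - C ^ 2 * ((t + s) * (A ^ 2 * t + s))
      = (1 - C ^ 2) * (A * t - s) ^ 2 + t * s * (4 * A - C ^ 2 * (A + 1) ^ 2) := by ring
  nlinarith [mul_nonneg (sub_nonneg.2 hC1) (sq_nonneg (A * t - s)),
    mul_nonneg (mul_nonneg ht hs) (sub_nonneg.2 hC)]

lemma two_mul_sub_one_sq_mul_add_one_sq_le {A k : ℝ} (hk : 1 / 2 ≤ k) (hk1 : k ≤ 1)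
    (hA : 1 ≤ A) (hAk : A * k ^ 2 ≤ 1) :
    (2 * k - 1) ^ 2 * (A + 1) ^ 2 ≤ 4 * A := by
  have hkey : k ^ 2 * (4 * A - (2 * k - 1) ^ 2 * (A + 1) ^ 2)
      = (2 * k - 1) ^ 2 * ((A - 1) * (1 - A * k ^ 2))
        + (A - 1) * ((1 - k) * (12 * k ^ 3 + 3 * k - 1)) + 16 * k ^ 3 * (1 - k) := by ring
  have h1 : 0 ≤ (2 * k - 1) ^ 2 * ((A - 1) * (1 - A * k ^ 2)) := by
    have := mul_nonneg (sub_nonneg.2 hA) (sub_nonneg.2 hAk)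
    positivity
  have h2 : 0 ≤ (A - 1) * ((1 - k) * (12 * k ^ 3 + 3 * k - 1)) :=
    mul_nonneg (by linarith) (mul_nonneg (by linarith) (by nlinarith))
  have h3 : 0 ≤ 16 * k ^ 3 * (1 - k) := mul_nonneg (by positivity) (by linarith)
  have hk2 : 0 < k ^ 2 := by positivity
  nlinarith

section

variable {E : Type*} [NormedAddCommGroup E] [InnerProductSpace ℝ E] {u v : E}

lemma InnerProductGeometry.angle_le_of_cos_mul_le_inner {x y : E} {θ : ℝ} (hθ0 : 0 ≤ θ)
    (hθπ : θ ≤ π) (hxy : 0 < ⟪x, y⟫_ℝ) (h : cos θ * (‖x‖ * ‖y‖) ≤ ⟪x, y⟫_ℝ) :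
    angle x y ≤ θ := by
  have hx : x ≠ 0 := by rintro rfl; simp at hxy
  have hy : y ≠ 0 := by rintro rfl; simp at hxy
  rw [← arccos_cos hθ0 hθπ]
  exact arccos_le_arccos ((le_div_iff₀ (by positivity)).2 h)

lemma LinearIndependent.exists_eq_smul_add_smul (hE : finrank ℝ E = 2)
    (h : LinearIndependent ℝ ![u, v]) (x : E) : ∃ a b : ℝ, x = a • u + b • v := by
  have : FiniteDimensional ℝ E := .of_finrank_eq_succ hE
  let B := basisOfLinearIndependentOfCardEqFinrank h (by simp [hE])
  refine ⟨B.repr x 0, B.repr x 1, ?_⟩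
  conv_lhs => rw [← B.sum_repr x]
  simp [B, Fin.sum_univ_two]

lemma Orthonormal.inner_smul_add_smul (h : Orthonormal ℝ ![u, v]) (p q r s : ℝ) :
    ⟪p • u + q • v, r • u + s • v⟫_ℝ = p * r + q * s := by
  simp only [orthonormal_vecCons_iff, Fin.forall_fin_one, Matrix.cons_val_zero,
    Orthonormal.of_isEmpty, and_true] at h
  obtain ⟨hu, huv, hv⟩ := h
  simp only [inner_add_left, inner_add_right, real_inner_smul_left, real_inner_smul_right,
    real_inner_self_eq_norm_sq, hu, hv, huv, real_inner_comm u v]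
  ring

lemma Orthonormal.angle_smul_add_smul_map_le (h : Orthonormal ℝ ![u, v]) {P : E →ₗ[ℝ] E}
    {A θ : ℝ} (hPu : P u = A • u) (hPv : P v = v) (hA : 0 < A) (hθ0 : 0 ≤ θ) (hθ : θ ≤ π / 2)
    (hcos : cos θ ^ 2 * (A + 1) ^ 2 ≤ 4 * A) {a b : ℝ} (hab : a • u + b • v ≠ 0) :
    angle (a • u + b • v) (P (a • u + b • v)) ≤ θ := by
  have hPx : P (a • u + b • v) = (A * a) • u + b • v := by
    rw [map_add, map_smul, map_smul, hPu, hPv, smul_smul, mul_comm a A]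
  have hx : ‖a • u + b • v‖ ^ 2 = a ^ 2 + b ^ 2 := by
    rw [← real_inner_self_eq_norm_sq, h.inner_smul_add_smul]; ring
  have hPx' : ‖P (a • u + b • v)‖ ^ 2 = A ^ 2 * a ^ 2 + b ^ 2 := by
    rw [← real_inner_self_eq_norm_sq, hPx, h.inner_smul_add_smul]; ring
  have hinner : ⟪a • u + b • v, P (a • u + b • v)⟫_ℝ = A * a ^ 2 + b ^ 2 := by
    rw [hPx, h.inner_smul_add_smul]; ring
  have hpos : 0 < A * a ^ 2 + b ^ 2 := by
    have : 0 < a ^ 2 + b ^ 2 := hx ▸ by positivity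
    rcases eq_or_ne a 0 with rfl | ha
    · simpa using this
    · positivity
  have hcos0 : 0 ≤ cos θ := cos_nonneg_of_mem_Icc ⟨by linarith [pi_pos], hθ⟩
  refine angle_le_of_cos_mul_le_inner hθ0 (by linarith [pi_pos]) (hinner ▸ hpos) ?_
  rw [hinner, ← pow_le_pow_iff_left₀ (by positivity) hpos.le two_ne_zero, mul_pow, mul_pow, hx,
    hPx']
  exact sq_mul_mul_le_sq_of_sq_mul_add_one_sq_le hA.le hcos (sq_nonneg a) (sq_nonneg b)

end

/-- If `1 ≤ A < d⁴` with `d = 1/cos(π/(4N))` and `P` is the positive definite map with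
eigenvalues `A`, `1` w.r.t. an orthonormal basis of `ℝ²`, then `P` rotates every
nonzero vector by an angle of at most `π/(2N)`. -/
theorem stmt7 (N : ℕ) (hN : 1 ≤ N) (A d : ℝ)
    (hd : d = 1 / Real.cos (Real.pi / (4 * N)))
    (hA1 : 1 ≤ A) (hA2 : A < d ^ 4)
    (u v : EuclideanSpace ℝ (Fin 2)) (hu : ‖u‖ = 1) (hv : ‖v‖ = 1)
    (huv : inner ℝ u v = (0 : ℝ))
    (P : EuclideanSpace ℝ (Fin 2) →ₗ[ℝ] EuclideanSpace ℝ (Fin 2))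
    (hPu : P u = A • u) (hPv : P v = v)
    (x : EuclideanSpace ℝ (Fin 2)) (hx : x ≠ 0) :
    Real.arccos ((inner ℝ x (P x) : ℝ) / (‖x‖ * ‖P x‖)) ≤ Real.pi / (2 * N) := by
  have hNR : (1 : ℝ) ≤ N := by exact_mod_cast hN
  have h2α : π / (2 * N) = 2 * (π / (4 * N)) := by field_simp; ring
  set α := π / (4 * N)
  have hα0 : 0 ≤ α := by positivity
  have h2απ : 2 * α ≤ π / 2 := by
    rw [← h2α]; exact div_le_div_of_nonneg_left pi_pos.le two_pos (by linarith)
  have hcos2α : 0 ≤ 2 * cos α ^ 2 - 1 :=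
    cos_two_mul α ▸ cos_nonneg_of_mem_Icc ⟨by linarith [pi_pos], h2απ⟩
  have hAα : A * (cos α ^ 2) ^ 2 ≤ 1 := by
    have hcα : 0 < cos α := cos_pos_of_mem_Ioo ⟨by linarith [pi_pos], by linarith [pi_pos]⟩
    rw [hd, div_pow, one_pow, lt_div_iff₀ (by positivity)] at hA2
    linarith [pow_mul (cos α) 2 2]
  have huv' : Orthonormal ℝ ![u, v] := by simp [hu, hv, huv]
  obtain ⟨a, b, rfl⟩ := huv'.linearIndependent.exists_eq_smul_add_smul (by simp) x
  rw [h2α]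
  refine huv'.angle_smul_add_smul_map_le hPu hPv (by linarith) (by positivity) h2απ ?_ hx
  rw [cos_two_mul]
  exact two_mul_sub_one_sq_mul_add_one_sq_le (by linarith) (cos_sq_le_one α) hA1 hAα
end

section
/- Let N be a positive integer and d_N = 1/cos(π/(4N)). Then π/(2N) = 2·arccos(1/d_N), and moreover arccos(2d_N²/(d_N⁴+1)) ≤ π/(2N). -/
/-!
With `θ = π/(4N)` we have `1/d = cos θ`, so `arccos (1/d) = θ`. For the inequality, write
`x = cos² θ ≤ 1`: then `2d²/(d⁴+1) = 2x/(1+x²) ≥ 2x - 1 = cos 2θ` because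
`(2x - 1)(1 + x²) - 2x = (x - 1)(2x² + x + 1) ≤ 0`, and `arccos` is antitone.
-/

open Real

lemma two_mul_sub_one_le_two_mul_div_one_add_sq {x : ℝ} (hx : x ≤ 1) :
    2 * x - 1 ≤ 2 * x / (1 + x ^ 2) := by
  have hfactor : 0 ≤ 2 * x ^ 2 + x + 1 := by nlinarith [sq_nonneg (x + 1 / 4)]
  rw [le_div_iff₀ (by positivity)]
  nlinarith [mul_nonpos_of_nonpos_of_nonneg (sub_nonpos.mpr hx) hfactor]

lemma two_mul_inv_sq_div_inv_pow_four_add_one (c : ℝ) :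
    2 * c⁻¹ ^ 2 / (c⁻¹ ^ 4 + 1) = 2 * c ^ 2 / (1 + c ^ 4) := by
  rcases eq_or_ne c 0 with rfl | hc
  · simp
  · field_simp

lemma arccos_two_mul_cos_sq_div_le {θ : ℝ} (hθ₀ : 0 ≤ θ) (hθ : θ ≤ π / 2) :
    arccos (2 * cos θ ^ 2 / (1 + cos θ ^ 4)) ≤ 2 * θ := calc
  arccos (2 * cos θ ^ 2 / (1 + cos θ ^ 4))
      ≤ arccos (2 * cos θ ^ 2 - 1) := by
        apply antitone_arccos
        simpa only [← pow_mul] using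
          two_mul_sub_one_le_two_mul_div_one_add_sq (cos_sq_le_one θ)
    _ = 2 * θ := by rw [← cos_two_mul, arccos_cos (by linarith) (by linarith)]

/-- With `d_N = 1/cos(π/(4N))`, one has `π/(2N) = 2·arccos(1/d_N)` and
`arccos(2d_N²/(d_N⁴+1)) ≤ π/(2N)`. -/
theorem stmt12 (N : ℕ) (hN : 1 ≤ N) (d : ℝ)
    (hd : d = 1 / Real.cos (Real.pi / (4 * N))) :
    Real.pi / (2 * N) = 2 * Real.arccos (1 / d) ∧
      Real.arccos (2 * d ^ 2 / (d ^ 4 + 1)) ≤ Real.pi / (2 * N) := by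
  set θ := π / (4 * N)
  have hθ₀ : 0 ≤ θ := by positivity
  have hθ : θ ≤ π / 2 :=
    div_le_div_of_nonneg_left pi_nonneg two_pos (by norm_cast; omega)
  have h2θ : π / (2 * N) = 2 * θ := by ring
  have harccos : arccos (1 / d) = θ := by
    rw [hd, one_div_one_div, arccos_cos hθ₀ (by linarith [pi_pos])]
  refine ⟨by rw [h2θ, harccos], ?_⟩
  rw [h2θ, hd, one_div, two_mul_inv_sq_div_inv_pow_four_add_one]
  exact arccos_two_mul_cos_sq_div_le hθ₀ hθ
end
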